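/- Let Ω ⊂ ℝⁿ be a bounded domain, ε > 0, α ≥ 0, β > 0 with α + β = 1, and F : Γ_ε → ℝ bounded Borel. Then there exists a bounded Borel function u : Ω_ε → ℝ with u = F on Γ_ε satisfying the dynamic programming principle: u(x) = (α/2) sup_{B_ε(x)} u + (α/2) inf_{B_ε(x)} u + β ⨍_{B_ε(x)} u dy for all x ∈ Ω. Moreover u is the uniform limit of the iterates u_{j+1} = T u_j started from u₀ = inf_{Γ_ε} F on Ω and u₀ = F on Γ_ε. -/

import Mathlib

open MeasureTheory Metric Set Classical

def bdryStrip {n : ℕ} (Ω : Set (EuclideanSpace ℝ (Fin n))) (ε : ℝ) :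
    Set (EuclideanSpace ℝ (Fin n)) :=
  {x | x ∉ Ω ∧ Metric.infDist x Ω ≤ ε}

noncomputable def dppT {n : ℕ} (Ω : Set (EuclideanSpace ℝ (Fin n))) (ε α β : ℝ)
    (u : EuclideanSpace ℝ (Fin n) → ℝ) (x : EuclideanSpace ℝ (Fin n)) : ℝ :=
  if x ∈ Ω then
    α / 2 * sSup (u '' ball x ε) + α / 2 * sInf (u '' ball x ε) +
      β * ⨍ y in ball x ε, u y
  else u x

open Filter Topology

/-!
The iterates `u_j = dppIter j` of `T = dppT` increase: `u₀ ≤ T u₀` because `u₀ = inf F` on `Ω`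
while `u₀ ≥ inf F` on every ball centred in `Ω` (such balls lie in `Ω ∪ Γ_ε`), and `T` is
monotone. They are bounded by `sup |F|`, so they converge pointwise to a bounded Borel
`u = dppLim` with `u ≤ T u`. If `u ≤ u_j + M_j`, comparing `T u` with `T u_j` term by term gives
`T u ≤ u_{j+1} + α M_j + β |B_ε|⁻¹ ‖u - u_j‖_{L¹(Ω)}`: the sup and inf move by at most `M_j`, and
as `u - u_j` vanishes off `Ω` the average moves by at most the `L¹(Ω)` gap. Taking this as the
recursion for `M_j = dppErr j`, the gap tends to zero by dominated convergence and `α < 1` forces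
`M_j → 0`. This is the uniform convergence, and `u ≤ T u ≤ u_{j+1} + M_{j+1} ≤ u + M_{j+1}`
gives `u = T u` on `Ω`.
-/

section General

variable {ι : Type*}

lemma csSup_image_le_csSup_image_add {s : Set ι} {v w : ι → ℝ} {c : ℝ} (hs : s.Nonempty)
    (hw : BddAbove (w '' s)) (h : ∀ y ∈ s, v y ≤ w y + c) : sSup (v '' s) ≤ sSup (w '' s) + c :=
  csSup_le (hs.image v) <| forall_mem_image.2 fun y hy =>
    (h y hy).trans (add_le_add_left (le_csSup hw (mem_image_of_mem w hy)) c)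

lemma csInf_image_le_csInf_image_add {s : Set ι} {v w : ι → ℝ} {c : ℝ} (hs : s.Nonempty)
    (hv : BddBelow (v '' s)) (h : ∀ y ∈ s, v y ≤ w y + c) : sInf (v '' s) ≤ sInf (w '' s) + c :=
  sub_le_iff_le_add.1 <| le_csInf (hs.image w) <| forall_mem_image.2 fun y hy =>
    sub_le_iff_le_add.2 ((csInf_le hv (mem_image_of_mem v hy)).trans (h y hy))

lemma abs_sInf_image_le {s : Set ι} {v : ι → ℝ} {C : ℝ} (hC : 0 ≤ C) (h : ∀ y, |v y| ≤ C) :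
    |sInf (v '' s)| ≤ C := by
  rcases s.eq_empty_or_nonempty with rfl | ⟨y, hy⟩
  · simpa using hC
  have hbdd : BddBelow (v '' s) := ⟨-C, forall_mem_image.2 fun z _ => (abs_le.1 (h z)).1⟩
  exact abs_le.2 ⟨le_csInf (Set.Nonempty.image v ⟨y, hy⟩)
    (forall_mem_image.2 fun z _ => (abs_le.1 (h z)).1),
    (csInf_le hbdd (mem_image_of_mem v hy)).trans (abs_le.1 (h y)).2⟩

lemma setAverage_le_setAverage_add [MeasurableSpace ι] {μ : Measure ι} {s : Set ι} {v w : ι → ℝ}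
    {d : ℝ} (h : ∫ y in s, v y ∂μ ≤ ∫ y in s, w y ∂μ + d) :
    ⨍ y in s, v y ∂μ ≤ ⨍ y in s, w y ∂μ + d / μ.real s := by
  simp only [setAverage_eq, smul_eq_mul]
  rw [div_eq_inv_mul, ← mul_add]
  exact mul_le_mul_of_nonneg_left h (inv_nonneg.2 measureReal_nonneg)

lemma setIntegral_le_setIntegral_of_support_subset [MeasurableSpace ι] {μ : Measure ι}
    {s t : Set ι} {g : ι → ℝ} (ht : MeasurableSet t) (hg : IntegrableOn g t μ) (hg0 : 0 ≤ g)
    (hgt : Function.support g ⊆ t) : ∫ y in s, g y ∂μ ≤ ∫ y in t, g y ∂μ :=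
  calc ∫ y in s, g y ∂μ = ∫ y in s, t.indicator g y ∂μ := by rw [indicator_eq_self.2 hgt]
    _ ≤ ∫ y, t.indicator g y ∂μ :=
      setIntegral_le_integral (hg.integrable_indicator ht)
        (ae_of_all _ (indicator_nonneg fun y _ => hg0 y))
    _ = ∫ y in t, g y ∂μ := integral_indicator ht

lemma integrableOn_of_abs_le [MeasurableSpace ι] {μ : Measure ι} {s : Set ι} {v : ι → ℝ} {C : ℝ}
    (hv : Measurable v) (h : ∀ y, |v y| ≤ C) (hs : μ s < ⊤) : IntegrableOn v s μ :=
  IntegrableOn.of_bound hs hv.aestronglyMeasurable C (ae_of_all _ fun y => h y)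

end General

section Ball

variable {X : Type*} [PseudoMetricSpace X]

lemma lowerSemicontinuous_sSup_image_ball {β : Type*} [ConditionallyCompleteLinearOrder β]
    {v : X → β} (hv : BddAbove (range v)) {ε : ℝ} (hε : 0 < ε) :
    LowerSemicontinuous fun x => sSup (v '' ball x ε) := by
  intro x t ht
  obtain ⟨_, ⟨y, hy, rfl⟩, hty⟩ := exists_lt_of_lt_csSup ((nonempty_ball.2 hε).image v) ht
  filter_upwards [isOpen_ball.mem_nhds (mem_ball_comm.1 hy)] with x' hx'
  exact hty.trans_le (le_csSup (hv.mono (image_subset_range _ _))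
    (mem_image_of_mem v (mem_ball_comm.1 hx')))

lemma upperSemicontinuous_sInf_image_ball {β : Type*} [ConditionallyCompleteLinearOrder β]
    {v : X → β} (hv : BddBelow (range v)) {ε : ℝ} (hε : 0 < ε) :
    UpperSemicontinuous fun x => sInf (v '' ball x ε) :=
  lowerSemicontinuous_sSup_image_ball (β := βᵒᵈ) hv hε

lemma measurable_setIntegral_ball [MeasurableSpace X] [OpensMeasurableSpace X]
    [SecondCountableTopology X] {μ : Measure X} [SFinite μ] {v : X → ℝ} (hv : Measurable v)
    (ε : ℝ) : Measurable fun x => ∫ y in ball x ε, v y ∂μ := by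
  set S : Set (X × X) := {p | dist p.2 p.1 < ε}
  have hS : MeasurableSet S :=
    (isOpen_lt (continuous_snd.dist continuous_fst) continuous_const).measurableSet
  have hg : StronglyMeasurable (S.indicator fun p => v p.2) :=
    ((hv.comp measurable_snd).indicator hS).stronglyMeasurable
  convert (hg.integral_prod_right' (ν := μ)).measurable using 2 with x
  rw [← integral_indicator measurableSet_ball]
  rfl

end Ball

lemma tendsto_zero_of_le_mul_add {r : ℝ} (hr0 : 0 ≤ r) (hr1 : r < 1) {M c : ℕ → ℝ}
    (hM : ∀ j, 0 ≤ M j) (hMc : ∀ j, M (j + 1) ≤ r * M j + c j)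
    (hc : Tendsto c atTop (𝓝 0)) : Tendsto M atTop (𝓝 0) := by
  refine tendsto_order.2 ⟨fun a ha => .of_forall fun j => ha.trans_le (hM j), fun δ hδ => ?_⟩
  obtain ⟨N, hN⟩ := eventually_atTop.1 <|
    hc.eventually (ge_mem_nhds (show 0 < (1 - r) * (δ / 2) by nlinarith))
  -- once `c ≤ (1 - r) δ / 2`, the recursion keeps `M` below a geometric tail plus `δ / 2`
  have hgeom : ∀ k, M (N + k) ≤ r ^ k * M N + δ / 2 := by
    intro k
    induction k with
    | zero => simpa using (half_pos hδ).le
    | succ k ih =>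
      have := hN (N + k) (Nat.le_add_right N k)
      calc M (N + (k + 1)) ≤ r * M (N + k) + c (N + k) := hMc (N + k)
        _ ≤ r * (r ^ k * M N + δ / 2) + (1 - r) * (δ / 2) := by gcongr
        _ = r ^ (k + 1) * M N + δ / 2 := by ring
  obtain ⟨K, hK⟩ := eventually_atTop.1 <|
    ((tendsto_pow_atTop_nhds_zero_of_lt_one hr0 hr1).mul_const (M N)).eventually
      (gt_mem_nhds (show 0 * M N < δ / 2 by linarith))
  refine eventually_atTop.2 ⟨N + K, fun j hj => ?_⟩
  obtain ⟨k, rfl⟩ := Nat.exists_eq_add_of_le (le_of_add_le_left hj)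
  linarith [hgeom k, hK k (by omega)]

section Operator

variable {n : ℕ} {Ω : Set (EuclideanSpace ℝ (Fin n))} {ε α β C : ℝ}
  {v w : EuclideanSpace ℝ (Fin n) → ℝ} {x : EuclideanSpace ℝ (Fin n)}

lemma dppT_of_mem (hx : x ∈ Ω) : dppT Ω ε α β v x =
    α / 2 * sSup (v '' ball x ε) + α / 2 * sInf (v '' ball x ε) + β * ⨍ y in ball x ε, v y :=
  if_pos hx

lemma dppT_of_notMem (hx : x ∉ Ω) : dppT Ω ε α β v x = v x := if_neg hx

lemma ball_subset_union_bdryStrip (hx : x ∈ Ω) : ball x ε ⊆ Ω ∪ bdryStrip Ω ε := fun _ hy =>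
  or_iff_not_imp_left.2 fun hyΩ => ⟨hyΩ, (infDist_le_dist_of_mem hx).trans (mem_ball.1 hy).le⟩

lemma dppT_le_add_of_mem (hx : x ∈ Ω) (hε : 0 < ε) (hα : 0 ≤ α) (hβ : 0 ≤ β) {c d : ℝ}
    (hv : BddBelow (v '' ball x ε)) (hw : BddAbove (w '' ball x ε))
    (hc : ∀ y ∈ ball x ε, v y ≤ w y + c)
    (hd : ∫ y in ball x ε, v y ≤ (∫ y in ball x ε, w y) + d) :
    dppT Ω ε α β v x ≤ dppT Ω ε α β w x + (α * c + β * (d / volume.real (ball x ε))) := by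
  have hS := csSup_image_le_csSup_image_add (nonempty_ball.2 hε) hw hc
  have hI := csInf_image_le_csInf_image_add (nonempty_ball.2 hε) hv hc
  have hA := setAverage_le_setAverage_add hd
  rw [dppT_of_mem hx, dppT_of_mem hx]
  linear_combination (α / 2) * hS + (α / 2) * hI + β * hA

lemma dppT_le_add_of_le_on_ball (hx : x ∈ Ω) (hε : 0 < ε) (hα : 0 ≤ α) (hβ : 0 ≤ β)
    (hαβ : α + β = 1) (hv : Measurable v) (hw : Measurable w) (hvC : ∀ y, |v y| ≤ C)
    (hwC : ∀ y, |w y| ≤ C) {c : ℝ} (h : ∀ y ∈ ball x ε, v y ≤ w y + c) :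
    dppT Ω ε α β v x ≤ dppT Ω ε α β w x + c := by
  have hV : volume.real (ball x ε) ≠ 0 :=
    ENNReal.toReal_ne_zero.2 ⟨(measure_ball_pos volume x hε).ne', measure_ball_lt_top.ne⟩
  have hd : ∫ y in ball x ε, v y ≤ (∫ y in ball x ε, w y) + volume.real (ball x ε) * c := by
    have hB : volume (ball x ε) < ⊤ := measure_ball_lt_top
    have hwi := integrableOn_of_abs_le hw hwC hB
    rw [← smul_eq_mul, ← setIntegral_const, ← integral_add hwi (integrableOn_const hB.ne)]
    exact setIntegral_mono_on (integrableOn_of_abs_le hv hvC hB)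
      (hwi.add (integrableOn_const hB.ne)) measurableSet_ball h
  have := dppT_le_add_of_mem hx hε hα hβ ⟨-C, forall_mem_image.2 fun y _ => (abs_le.1 (hvC y)).1⟩
    ⟨C, forall_mem_image.2 fun y _ => (abs_le.1 (hwC y)).2⟩ h hd
  rwa [mul_div_cancel_left₀ _ hV, ← add_mul, hαβ, one_mul] at this

lemma dppT_le_add_of_le (hε : 0 < ε) (hα : 0 ≤ α) (hβ : 0 ≤ β) (hαβ : α + β = 1)
    (hv : Measurable v) (hw : Measurable w) (hvC : ∀ y, |v y| ≤ C) (hwC : ∀ y, |w y| ≤ C)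
    {c : ℝ} (h : ∀ y, v y ≤ w y + c) (x : EuclideanSpace ℝ (Fin n)) :
    dppT Ω ε α β v x ≤ dppT Ω ε α β w x + c := by
  by_cases hx : x ∈ Ω
  · exact dppT_le_add_of_le_on_ball hx hε hα hβ hαβ hv hw hvC hwC fun y _ => h y
  · simpa only [dppT_of_notMem hx] using h x

lemma dppT_const (hε : 0 < ε) (hαβ : α + β = 1) (c : ℝ) :
    dppT Ω ε α β (fun _ => c) = fun _ => c := by
  funext x
  by_cases hx : x ∈ Ω
  · rw [dppT_of_mem hx, (nonempty_ball.2 hε).image_const, csSup_singleton, csInf_singleton,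
      setAverage_const (measure_ball_pos volume x hε).ne' measure_ball_lt_top.ne]
    linear_combination c * hαβ
  · exact dppT_of_notMem hx

lemma abs_dppT_le (hε : 0 < ε) (hα : 0 ≤ α) (hβ : 0 ≤ β) (hαβ : α + β = 1)
    (hv : Measurable v) (hvC : ∀ y, |v y| ≤ C) (x : EuclideanSpace ℝ (Fin n)) :
    |dppT Ω ε α β v x| ≤ C := by
  have hC : |C| ≤ C := (abs_of_nonneg ((abs_nonneg _).trans (hvC 0))).le
  have hlow := dppT_le_add_of_le (Ω := Ω) hε hα hβ hαβ measurable_const hv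
    (fun _ => (abs_neg C).trans_le hC) hvC (c := 0) (fun y => by simpa using (abs_le.1 (hvC y)).1) x
  have hup := dppT_le_add_of_le (Ω := Ω) hε hα hβ hαβ hv measurable_const hvC (fun _ => hC)
    (c := 0) (fun y => by simpa using (abs_le.1 (hvC y)).2) x
  rw [dppT_const hε hαβ, add_zero] at hlow hup
  exact abs_le.2 ⟨hlow, hup⟩

lemma measurable_dppT (hΩ : MeasurableSet Ω) (hε : 0 < ε) (hv : Measurable v)
    (hvC : ∀ y, |v y| ≤ C) : Measurable (dppT Ω ε α β v) := by
  have hbdd : Bornology.IsBounded (range v) :=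
    isBounded_iff_forall_norm_le.2 ⟨C, forall_mem_range.2 hvC⟩
  have havg : (fun x => ⨍ y in ball x ε, v y) =
      fun x => (volume.real (ball (0 : EuclideanSpace ℝ (Fin n)) ε))⁻¹ * ∫ y in ball x ε, v y := by
    funext x
    rw [setAverage_eq, smul_eq_mul, Measure.addHaar_real_ball_center]
  refine Measurable.ite hΩ (Measurable.add (Measurable.add ?_ ?_) ?_) hv
  · exact ((lowerSemicontinuous_sSup_image_ball hbdd.bddAbove hε).measurable).const_mul _
  · exact ((upperSemicontinuous_sInf_image_ball hbdd.bddBelow hε).measurable).const_mul _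
  · exact (havg ▸ (measurable_setIntegral_ball hv ε).const_mul _).const_mul _

end Operator

section Iteration

variable {n : ℕ} {Ω : Set (EuclideanSpace ℝ (Fin n))} {ε α β C : ℝ}
  {F : EuclideanSpace ℝ (Fin n) → ℝ} {x : EuclideanSpace ℝ (Fin n)}

noncomputable def dppInit (Ω : Set (EuclideanSpace ℝ (Fin n))) (ε : ℝ)
    (F : EuclideanSpace ℝ (Fin n) → ℝ) : EuclideanSpace ℝ (Fin n) → ℝ :=
  fun x => if x ∈ Ω then sInf (F '' bdryStrip Ω ε) else F x

noncomputable def dppIter (Ω : Set (EuclideanSpace ℝ (Fin n))) (ε α β : ℝ)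
    (F : EuclideanSpace ℝ (Fin n) → ℝ) : ℕ → EuclideanSpace ℝ (Fin n) → ℝ
  | 0 => dppInit Ω ε F
  | j + 1 => dppT Ω ε α β (dppIter Ω ε α β F j)

noncomputable def dppLim (Ω : Set (EuclideanSpace ℝ (Fin n))) (ε α β : ℝ)
    (F : EuclideanSpace ℝ (Fin n) → ℝ) : EuclideanSpace ℝ (Fin n) → ℝ :=
  fun x => ⨆ j, dppIter Ω ε α β F j x

lemma dppIter_of_notMem (hx : x ∉ Ω) (j : ℕ) : dppIter Ω ε α β F j x = F x := by
  induction j with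
  | zero => exact if_neg hx
  | succ j ih => exact (dppT_of_notMem hx).trans ih

lemma dppLim_of_notMem (hx : x ∉ Ω) : dppLim Ω ε α β F x = F x := by
  simp only [dppLim, dppIter_of_notMem hx, ciSup_const]

structure DppSetting (Ω : Set (EuclideanSpace ℝ (Fin n))) (ε α β : ℝ)
    (F : EuclideanSpace ℝ (Fin n) → ℝ) (C : ℝ) : Prop where
  ε_pos : 0 < ε
  α_nonneg : 0 ≤ α
  β_pos : 0 < β
  add_eq_one : α + β = 1
  measurableSet : MeasurableSet Ω
  isBounded : Bornology.IsBounded Ω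
  measurable_data : Measurable F
  abs_data_le : ∀ x, |F x| ≤ C

namespace DppSetting

lemma bound_nonneg (h : DppSetting Ω ε α β F C) : 0 ≤ C :=
  (abs_nonneg _).trans (h.abs_data_le 0)

lemma measurable_iter_and_abs_le (h : DppSetting Ω ε α β F C) (j : ℕ) :
    Measurable (dppIter Ω ε α β F j) ∧ ∀ x, |dppIter Ω ε α β F j x| ≤ C := by
  induction j with
  | zero =>
    refine ⟨Measurable.ite h.measurableSet measurable_const h.measurable_data, fun x => ?_⟩
    by_cases hx : x ∈ Ω
    · simpa [dppIter, dppInit, hx] using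
        abs_sInf_image_le h.bound_nonneg h.abs_data_le
    · simpa [dppIter, dppInit, hx] using h.abs_data_le x
  | succ j ih =>
    exact ⟨measurable_dppT h.measurableSet h.ε_pos ih.1 ih.2,
      abs_dppT_le h.ε_pos h.α_nonneg h.β_pos.le h.add_eq_one ih.1 ih.2⟩

lemma measurable_iter (h : DppSetting Ω ε α β F C) (j : ℕ) : Measurable (dppIter Ω ε α β F j) :=
  (h.measurable_iter_and_abs_le j).1

lemma abs_iter_le (h : DppSetting Ω ε α β F C) (j : ℕ) (x : EuclideanSpace ℝ (Fin n)) :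
    |dppIter Ω ε α β F j x| ≤ C :=
  (h.measurable_iter_and_abs_le j).2 x

lemma iter_le_iter_succ (h : DppSetting Ω ε α β F C) (j : ℕ) (x : EuclideanSpace ℝ (Fin n)) :
    dppIter Ω ε α β F j x ≤ dppIter Ω ε α β F (j + 1) x := by
  induction j generalizing x with
  | zero =>
    by_cases hx : x ∈ Ω
    · set m := sInf (F '' bdryStrip Ω ε)
      have hm : ∀ y ∈ ball x ε, m ≤ dppIter Ω ε α β F 0 y + 0 := by
        intro y hy
        rcases ball_subset_union_bdryStrip hx hy with hyΩ | hyΓ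
        · simp [dppIter, dppInit, hyΩ, m]
        · simpa [dppIter, dppInit, hyΓ.1] using csInf_le
            ⟨-C, forall_mem_image.2 fun z _ => (abs_le.1 (h.abs_data_le z)).1⟩
            (mem_image_of_mem F hyΓ)
      have := dppT_le_add_of_le_on_ball hx h.ε_pos h.α_nonneg h.β_pos.le h.add_eq_one
        measurable_const (h.measurable_iter 0)
        (fun _ => abs_sInf_image_le h.bound_nonneg h.abs_data_le) (h.abs_iter_le 0) hm
      simpa [dppT_const h.ε_pos h.add_eq_one, dppIter, dppInit, hx] using this
    · simp [dppIter, dppT_of_notMem hx]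
  | succ j ih =>
    simpa [dppIter] using dppT_le_add_of_le h.ε_pos h.α_nonneg h.β_pos.le h.add_eq_one
      (h.measurable_iter j) (h.measurable_iter (j + 1)) (h.abs_iter_le j) (h.abs_iter_le (j + 1))
      (c := 0) (fun y => by simpa using ih y) x

lemma bddAbove_range_iter (h : DppSetting Ω ε α β F C) (x : EuclideanSpace ℝ (Fin n)) :
    BddAbove (range fun j => dppIter Ω ε α β F j x) :=
  ⟨C, forall_mem_range.2 fun j => (abs_le.1 (h.abs_iter_le j x)).2⟩

lemma iter_le_lim (h : DppSetting Ω ε α β F C) (j : ℕ) (x : EuclideanSpace ℝ (Fin n)) :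
    dppIter Ω ε α β F j x ≤ dppLim Ω ε α β F x :=
  le_ciSup (h.bddAbove_range_iter x) j

lemma tendsto_iter_lim (h : DppSetting Ω ε α β F C) (x : EuclideanSpace ℝ (Fin n)) :
    Tendsto (fun j => dppIter Ω ε α β F j x) atTop (𝓝 (dppLim Ω ε α β F x)) :=
  tendsto_atTop_ciSup (monotone_nat_of_le_succ fun j => h.iter_le_iter_succ j x)
    (h.bddAbove_range_iter x)

lemma abs_lim_le (h : DppSetting Ω ε α β F C) (x : EuclideanSpace ℝ (Fin n)) :
    |dppLim Ω ε α β F x| ≤ C :=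
  abs_le.2 ⟨(abs_le.1 (h.abs_iter_le 0 x)).1.trans (h.iter_le_lim 0 x),
    ciSup_le fun j => (abs_le.1 (h.abs_iter_le j x)).2⟩

lemma measurable_lim (h : DppSetting Ω ε α β F C) : Measurable (dppLim Ω ε α β F) :=
  measurable_of_tendsto_metrizable h.measurable_iter (tendsto_pi_nhds.2 h.tendsto_iter_lim)

lemma lim_le_dppT_lim (h : DppSetting Ω ε α β F C) (x : EuclideanSpace ℝ (Fin n)) :
    dppLim Ω ε α β F x ≤ dppT Ω ε α β (dppLim Ω ε α β F) x :=
  ciSup_le fun j => (h.iter_le_iter_succ j x).trans <| by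
    simpa [dppIter] using dppT_le_add_of_le h.ε_pos h.α_nonneg h.β_pos.le h.add_eq_one
      (h.measurable_iter j) h.measurable_lim (h.abs_iter_le j) h.abs_lim_le (c := 0)
      (fun y => by simpa using h.iter_le_lim j y) x

end DppSetting

end Iteration

section ErrorBound

variable {n : ℕ} {Ω : Set (EuclideanSpace ℝ (Fin n))} {ε α β C : ℝ}
  {F : EuclideanSpace ℝ (Fin n) → ℝ} {x : EuclideanSpace ℝ (Fin n)}

noncomputable def dppDefect (Ω : Set (EuclideanSpace ℝ (Fin n))) (ε α β : ℝ)
    (F : EuclideanSpace ℝ (Fin n) → ℝ) (j : ℕ) : ℝ :=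
  ∫ y in Ω, (dppLim Ω ε α β F y - dppIter Ω ε α β F j y)

noncomputable def dppErr (Ω : Set (EuclideanSpace ℝ (Fin n))) (ε α β : ℝ)
    (F : EuclideanSpace ℝ (Fin n) → ℝ) (C : ℝ) : ℕ → ℝ
  | 0 => 2 * C
  | j + 1 => α * dppErr Ω ε α β F C j +
      β * (dppDefect Ω ε α β F j / volume.real (ball (0 : EuclideanSpace ℝ (Fin n)) ε))

namespace DppSetting

lemma abs_lim_sub_iter_le (h : DppSetting Ω ε α β F C) (j : ℕ) (y : EuclideanSpace ℝ (Fin n)) :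
    |dppLim Ω ε α β F y - dppIter Ω ε α β F j y| ≤ 2 * C :=
  (abs_sub _ _).trans ((add_le_add (h.abs_lim_le y) (h.abs_iter_le j y)).trans_eq (two_mul C).symm)

lemma integrableOn_lim_sub_iter (h : DppSetting Ω ε α β F C) (j : ℕ) :
    IntegrableOn (fun y => dppLim Ω ε α β F y - dppIter Ω ε α β F j y) Ω :=
  integrableOn_of_abs_le (h.measurable_lim.sub (h.measurable_iter j)) (h.abs_lim_sub_iter_le j)
    h.isBounded.measure_lt_top

lemma dppDefect_nonneg (h : DppSetting Ω ε α β F C) (j : ℕ) : 0 ≤ dppDefect Ω ε α β F j :=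
  setIntegral_nonneg h.measurableSet fun y _ => sub_nonneg.2 (h.iter_le_lim j y)

lemma dppErr_nonneg (h : DppSetting Ω ε α β F C) (j : ℕ) : 0 ≤ dppErr Ω ε α β F C j := by
  induction j with
  | zero => exact mul_nonneg zero_le_two h.bound_nonneg
  | succ j ih =>
    exact add_nonneg (mul_nonneg h.α_nonneg ih)
      (mul_nonneg h.β_pos.le (div_nonneg (h.dppDefect_nonneg j) measureReal_nonneg))

lemma dppT_lim_le (h : DppSetting Ω ε α β F C) {j : ℕ}
    (hj : ∀ y, dppLim Ω ε α β F y ≤ dppIter Ω ε α β F j y + dppErr Ω ε α β F C j)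
    (hx : x ∈ Ω) :
    dppT Ω ε α β (dppLim Ω ε α β F) x ≤
      dppIter Ω ε α β F (j + 1) x + dppErr Ω ε α β F C (j + 1) := by
  have hB : volume (ball x ε) < ⊤ := measure_ball_lt_top
  have hball : ∫ y in ball x ε, (dppLim Ω ε α β F y - dppIter Ω ε α β F j y) ≤
      dppDefect Ω ε α β F j :=
    setIntegral_le_setIntegral_of_support_subset h.measurableSet (h.integrableOn_lim_sub_iter j)
      (fun y => sub_nonneg.2 (h.iter_le_lim j y)) fun y hy => by_contra fun hyΩ =>
        hy (sub_eq_zero.2 ((dppLim_of_notMem hyΩ).trans (dppIter_of_notMem hyΩ j).symm))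
  rw [integral_sub (integrableOn_of_abs_le h.measurable_lim h.abs_lim_le hB)
    (integrableOn_of_abs_le (h.measurable_iter j) (h.abs_iter_le j) hB)] at hball
  have := dppT_le_add_of_mem hx h.ε_pos h.α_nonneg h.β_pos.le
    ⟨-C, forall_mem_image.2 fun y _ => (abs_le.1 (h.abs_lim_le y)).1⟩
    ⟨C, forall_mem_image.2 fun y _ => (abs_le.1 (h.abs_iter_le j y)).2⟩ (fun y _ => hj y)
    (sub_le_iff_le_add'.1 hball)
  rwa [Measure.addHaar_real_ball_center] at this

lemma lim_le_iter_add_dppErr (h : DppSetting Ω ε α β F C) (j : ℕ)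
    (x : EuclideanSpace ℝ (Fin n)) :
    dppLim Ω ε α β F x ≤ dppIter Ω ε α β F j x + dppErr Ω ε α β F C j := by
  induction j generalizing x with
  | zero =>
    show _ ≤ _ + 2 * C
    linarith [(abs_le.1 (h.abs_lim_le x)).2, (abs_le.1 (h.abs_iter_le 0 x)).1]
  | succ j ih =>
    by_cases hx : x ∈ Ω
    · exact (h.lim_le_dppT_lim x).trans (h.dppT_lim_le ih hx)
    · rw [dppLim_of_notMem hx, dppIter_of_notMem hx]
      exact le_add_of_nonneg_right (h.dppErr_nonneg _)

lemma tendsto_dppDefect (h : DppSetting Ω ε α β F C) :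
    Tendsto (dppDefect Ω ε α β F) atTop (𝓝 0) := by
  have := tendsto_integral_of_dominated_convergence (μ := volume.restrict Ω) (fun _ => 2 * C)
    (fun j => (h.integrableOn_lim_sub_iter j).aestronglyMeasurable)
    (integrableOn_const h.isBounded.measure_lt_top.ne)
    (fun j => ae_of_all _ (h.abs_lim_sub_iter_le j))
    (ae_of_all _ fun y => by simpa using (h.tendsto_iter_lim y).const_sub (dppLim Ω ε α β F y))
  rw [integral_zero] at this
  exact this

lemma tendsto_dppErr (h : DppSetting Ω ε α β F C) :
    Tendsto (dppErr Ω ε α β F C) atTop (𝓝 0) := by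
  refine tendsto_zero_of_le_mul_add h.α_nonneg (by linarith [h.β_pos, h.add_eq_one])
    h.dppErr_nonneg (fun j => le_rfl) ?_
  simpa using (h.tendsto_dppDefect.div_const _).const_mul β

lemma tendstoUniformly_iter (h : DppSetting Ω ε α β F C) :
    TendstoUniformly (dppIter Ω ε α β F) (dppLim Ω ε α β F) atTop := by
  refine Metric.tendstoUniformly_iff.2 fun δ hδ => ?_
  filter_upwards [h.tendsto_dppErr.eventually (gt_mem_nhds hδ)] with j hj x
  rw [Real.dist_eq, abs_of_nonneg (sub_nonneg.2 (h.iter_le_lim j x))]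
  linarith [h.lim_le_iter_add_dppErr j x]

lemma lim_eq_dppT_lim (h : DppSetting Ω ε α β F C) (hx : x ∈ Ω) :
    dppLim Ω ε α β F x = dppT Ω ε α β (dppLim Ω ε α β F) x := by
  have hlim : Tendsto (fun j => dppLim Ω ε α β F x + dppErr Ω ε α β F C (j + 1)) atTop
      (𝓝 (dppLim Ω ε α β F x)) := by
    simpa using tendsto_const_nhds.add (h.tendsto_dppErr.comp (tendsto_add_atTop_nat 1))
  exact le_antisymm (h.lim_le_dppT_lim x) (ge_of_tendsto' hlim fun j =>
    (h.dppT_lim_le (h.lim_le_iter_add_dppErr j) hx).trans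
      (add_le_add_left (h.iter_le_lim (j + 1) x) _))

end DppSetting

end ErrorBound

theorem dpp_exists_general {n : ℕ} (Ω : Set (EuclideanSpace ℝ (Fin n)))
    (hΩo : IsOpen Ω) (hΩb : Bornology.IsBounded Ω)
    (ε α β : ℝ) (hε : 0 < ε) (hα : 0 ≤ α) (hβ : 0 < β) (hαβ : α + β = 1)
    (F : EuclideanSpace ℝ (Fin n) → ℝ) (hF : Measurable F)
    (C : ℝ) (hFb : ∀ x, |F x| ≤ C) :
    ∃ u : EuclideanSpace ℝ (Fin n) → ℝ,
      Measurable u ∧ (∃ M, ∀ x, |u x| ≤ M) ∧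
      (∀ x ∈ bdryStrip Ω ε, u x = F x) ∧
      (∀ x ∈ Ω, u x =
        α / 2 * sSup (u '' ball x ε) + α / 2 * sInf (u '' ball x ε) +
          β * ⨍ y in ball x ε, u y) ∧
      (∀ useq : ℕ → EuclideanSpace ℝ (Fin n) → ℝ,
        useq 0 = (fun x => if x ∈ Ω then sInf (F '' bdryStrip Ω ε) else F x) →
        (∀ j, useq (j + 1) = dppT Ω ε α β (useq j)) →
        TendstoUniformlyOn useq u Filter.atTop (Ω ∪ bdryStrip Ω ε)) := by
  have h : DppSetting Ω ε α β F C := ⟨hε, hα, hβ, hαβ, hΩo.measurableSet, hΩb, hF, hFb⟩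
  refine ⟨dppLim Ω ε α β F, h.measurable_lim, ⟨C, h.abs_lim_le⟩,
    fun x hx => dppLim_of_notMem hx.1,
    fun x hx => (h.lim_eq_dppT_lim hx).trans (dppT_of_mem hx), fun useq h0 hsucc => ?_⟩
  have huseq : useq = dppIter Ω ε α β F := funext fun j => by
    induction j with
    | zero => exact h0
    | succ j ih => rw [hsucc, ih, dppIter]
  exact huseq ▸ h.tendstoUniformly_iter.tendstoUniformlyOn

/-- Existence of a p-harmonious function with given bounded Borel boundary data:
it solves the DPP, agrees with `F` on the boundary strip, and is the uniform limit
of the natural iteration started from `inf F`. -/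
theorem dpp_exists {n : ℕ} (hn : 0 < n) (Ω : Set (EuclideanSpace ℝ (Fin n)))
    (hΩo : IsOpen Ω) (hΩc : IsConnected Ω) (hΩb : Bornology.IsBounded Ω)
    (ε α β : ℝ) (hε : 0 < ε) (hα : 0 ≤ α) (hβ : 0 < β) (hαβ : α + β = 1)
    (F : EuclideanSpace ℝ (Fin n) → ℝ) (hF : Measurable F)
    (C : ℝ) (hFb : ∀ x, |F x| ≤ C) :
    ∃ u : EuclideanSpace ℝ (Fin n) → ℝ,
      Measurable u ∧ (∃ M, ∀ x, |u x| ≤ M) ∧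
      (∀ x ∈ bdryStrip Ω ε, u x = F x) ∧
      (∀ x ∈ Ω, u x =
        α / 2 * sSup (u '' ball x ε) + α / 2 * sInf (u '' ball x ε) +
          β * ⨍ y in ball x ε, u y) ∧
      (∀ useq : ℕ → EuclideanSpace ℝ (Fin n) → ℝ,
        useq 0 = (fun x => if x ∈ Ω then sInf (F '' bdryStrip Ω ε) else F x) →
        (∀ j, useq (j + 1) = dppT Ω ε α β (useq j)) →
        TendstoUniformlyOn useq u Filter.atTop (Ω ∪ bdryStrip Ω ε)) :=
  dpp_exists_general Ω hΩo hΩb ε α β hε hα hβ hαβ F hF C hFb
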